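/- Let c ≥ 1 be real and let x > 1 + c be real. Then ∫_{-2√c}^{2√c} (1/(x - t)) · ((1+c)/(2π)) · √(4c - t²)/((1+c)² - t²) dt = ((1-c)x + (1+c)·√(x² - 4c)) / (2(x² - (1+c)²)); that is, the Cauchy transform of the Kesten–McKay law with parameter c ≥ 1 has this closed form on (1+c, ∞). -/

import Mathlib

/-!
Write `r = 2√c` and `a = 1 + c`. Partial fractions in `t` split
`√(r² - t²) / ((x - t)(a² - t²))` into multiples of `√(r² - t²) / (y - t)` with `y = x`,
`y = a` and (after `t ↦ -t`) `y = a` again. Each of these is a semicircle Cauchy transform,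
`∫_{-r}^{r} √(r² - t²) / (y - t) dt = π (y - √(y² - r²))` for `y ≥ r`, read off an explicit
arcsin antiderivative. Since `r ≤ a` and `√(a² - r²) = c - 1`, the three values combine to the
closed form.
-/

open Real Set intervalIntegral
open MeasureTheory (volume)

noncomputable def semicirclePrimitive (r y t : ℝ) : ℝ :=
  y * arcsin (t / r) - √(y ^ 2 - r ^ 2) * arcsin ((y * t - r ^ 2) / (r * (y - t))) -
    √(r ^ 2 - t ^ 2)

section
variable {r y : ℝ}

theorem continuousOn_semicirclePrimitive (hr : 0 < r) (hy : r ≤ y) :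
    ContinuousOn (semicirclePrimitive r y) (Icc (-r) r) := by
  unfold semicirclePrimitive
  rcases hy.eq_or_lt with rfl | hy
  · simp only [sub_self, sqrt_zero, zero_mul, sub_zero]
    fun_prop
  have hden : ∀ t ∈ Icc (-r) r, r * (y - t) ≠ 0 := fun t ht => by
    have : 0 < y - t := by linarith [ht.2]
    positivity
  fun_prop (disch := assumption)

theorem hasDerivAt_arcsin_div {t : ℝ} (hr : 0 < r) (ht : t ∈ Ioo (-r) r) :
    HasDerivAt (fun t => arcsin (t / r)) (1 / √(r ^ 2 - t ^ 2)) t := by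
  obtain ⟨ht₁, ht₂⟩ := ht
  have hpos : 0 < r ^ 2 - t ^ 2 := by nlinarith
  have hsqrt : √(1 - (t / r) ^ 2) = √(r ^ 2 - t ^ 2) / r := by
    rw [show 1 - (t / r) ^ 2 = (r ^ 2 - t ^ 2) / r ^ 2 by field_simp, sqrt_div hpos.le,
      sqrt_sq hr.le]
  have hlo : t / r ≠ -1 := by rw [Ne, div_eq_iff hr.ne']; linarith
  have hhi : t / r ≠ 1 := by rw [Ne, div_eq_iff hr.ne']; linarith
  refine ((hasDerivAt_arcsin hlo hhi).comp t ((hasDerivAt_id t).div_const r)).congr_deriv ?_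
  rw [hsqrt]
  have := sqrt_pos.2 hpos
  field_simp

theorem hasDerivAt_sqrt_sq_sub_sq {t : ℝ} (ht : t ^ 2 < r ^ 2) :
    HasDerivAt (fun t => √(r ^ 2 - t ^ 2)) (-t / √(r ^ 2 - t ^ 2)) t := by
  have hpos : r ^ 2 - t ^ 2 ≠ 0 := by linarith
  refine (((hasDerivAt_pow 2 t).const_sub (r ^ 2)).sqrt hpos).congr_deriv ?_
  field_simp
  ring

theorem hasDerivAt_arcsin_moebius {t : ℝ} (hr : 0 < r) (hy : r < y) (ht : t ∈ Ioo (-r) r) :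
    HasDerivAt (fun t => arcsin ((y * t - r ^ 2) / (r * (y - t))))
      (√(y ^ 2 - r ^ 2) / ((y - t) * √(r ^ 2 - t ^ 2))) t := by
  obtain ⟨ht₁, ht₂⟩ := ht
  have hyt : 0 < y - t := by linarith
  have hpos : 0 < r ^ 2 - t ^ 2 := by nlinarith
  have hpos' : 0 < y ^ 2 - r ^ 2 := by nlinarith
  have hden : r * (y - t) ≠ 0 := by positivity
  set v := (y * t - r ^ 2) / (r * (y - t))
  -- the Möbius map `t ↦ v` sends `(-r, r)` onto `(-1, 1)` because of this identity
  have hkey : 1 - v ^ 2 = (y ^ 2 - r ^ 2) * (r ^ 2 - t ^ 2) / (r * (y - t)) ^ 2 := by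
    simp only [v]
    field_simp
    ring
  have hv : 0 < 1 - v ^ 2 := by rw [hkey]; positivity
  have hlo : v ≠ -1 := by rintro h; rw [h] at hv; norm_num at hv
  have hhi : v ≠ 1 := by rintro h; rw [h] at hv; norm_num at hv
  have hvd : HasDerivAt (fun t => (y * t - r ^ 2) / (r * (y - t)))
      ((y ^ 2 - r ^ 2) / (r * (y - t) ^ 2)) t := by
    refine ((((hasDerivAt_id t).const_mul y).sub_const (r ^ 2)).div
      (((hasDerivAt_id t).const_sub y).const_mul r) hden).congr_deriv ?_
    simp only [id]
    field_simp
    ring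
  refine ((hasDerivAt_arcsin hlo hhi).comp t hvd).congr_deriv ?_
  rw [hkey, sqrt_div (by positivity), sqrt_sq (by positivity), sqrt_mul hpos'.le]
  have := sqrt_pos.2 hpos
  have := sqrt_pos.2 hpos'
  field_simp
  rw [sq_sqrt hpos'.le]

theorem hasDerivAt_semicirclePrimitive {t : ℝ} (hr : 0 < r) (hy : r ≤ y)
    (ht : t ∈ Ioo (-r) r) :
    HasDerivAt (semicirclePrimitive r y) (√(r ^ 2 - t ^ 2) / (y - t)) t := by
  have hyt : 0 < y - t := by linarith [ht.2]
  have hpos : 0 < r ^ 2 - t ^ 2 := by nlinarith [ht.1, ht.2]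
  have hmiddle : HasDerivAt (fun t => √(y ^ 2 - r ^ 2) * arcsin ((y * t - r ^ 2) / (r * (y - t))))
      ((y ^ 2 - r ^ 2) / ((y - t) * √(r ^ 2 - t ^ 2))) t := by
    rcases hy.eq_or_lt with rfl | hy
    · simpa using hasDerivAt_const t (0 : ℝ)
    refine ((hasDerivAt_arcsin_moebius hr hy ht).const_mul _).congr_deriv ?_
    rw [← mul_div_assoc, mul_self_sqrt (by nlinarith)]
  refine ((((hasDerivAt_arcsin_div hr ht).const_mul y).sub hmiddle).sub
    (hasDerivAt_sqrt_sq_sub_sq (by linarith))).congr_deriv ?_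
  have := sqrt_pos.2 hpos
  field_simp
  rw [sq_sqrt hpos.le]
  ring

theorem semicirclePrimitive_sub (hr : 0 < r) (hy : r ≤ y) :
    semicirclePrimitive r y r - semicirclePrimitive r y (-r) = π * (y - √(y ^ 2 - r ^ 2)) := by
  have hlo : (y * -r - r ^ 2) / (r * (y - -r)) = -1 := by
    rw [div_eq_iff (by nlinarith)]; ring
  have hhi : √(y ^ 2 - r ^ 2) * arcsin ((y * r - r ^ 2) / (r * (y - r))) =
      √(y ^ 2 - r ^ 2) * (π / 2) := by
    rcases hy.eq_or_lt with rfl | hy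
    · simp
    rw [(div_eq_one_iff_eq (by nlinarith)).2 (by ring), arcsin_one]
  simp only [semicirclePrimitive, hlo, hhi, div_self hr.ne', neg_div, arcsin_neg, arcsin_one,
    neg_sq, sub_self, sqrt_zero]
  ring

theorem intervalIntegrable_sqrt_sq_sub_sq_div_sub (hr : 0 < r) (hy : r ≤ y) :
    IntervalIntegrable (fun t => √(r ^ 2 - t ^ 2) / (y - t)) volume (-r) r := by
  have hle : -r ≤ r := by linarith
  refine intervalIntegrable_deriv_of_nonneg (g := semicirclePrimitive r y) ?_ ?_ ?_ <;>
    simp only [uIcc_of_le hle, min_eq_left hle, max_eq_right hle]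
  · exact continuousOn_semicirclePrimitive hr hy
  · exact fun t ht => hasDerivAt_semicirclePrimitive hr hy ht
  · exact fun t ht => div_nonneg (sqrt_nonneg _) (by linarith [ht.2])

theorem integral_sqrt_sq_sub_sq_div_sub (hr : 0 < r) (hy : r ≤ y) :
    ∫ t in (-r)..r, √(r ^ 2 - t ^ 2) / (y - t) = π * (y - √(y ^ 2 - r ^ 2)) := by
  rw [integral_eq_sub_of_hasDeriv_right_of_le (by linarith) (continuousOn_semicirclePrimitive hr hy)
    (fun t ht => (hasDerivAt_semicirclePrimitive hr hy ht).hasDerivWithinAt)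
    (intervalIntegrable_sqrt_sq_sub_sq_div_sub hr hy), semicirclePrimitive_sub hr hy]

theorem sqrt_sq_sub_sq_div_sub_mul_sq_sub_sq_eq {a x t : ℝ} (hra : r ≤ a) (hax : a < x)
    (ht : t ∈ Icc (-r) r) :
    √(r ^ 2 - t ^ 2) / ((x - t) * (a ^ 2 - t ^ 2)) =
      1 / (a ^ 2 - x ^ 2) * (√(r ^ 2 - t ^ 2) / (x - t)) +
        1 / (2 * a * (x - a)) * (√(r ^ 2 - t ^ 2) / (a - t)) +
        1 / (2 * a * (x + a)) * (√(r ^ 2 - (-t) ^ 2) / (a - -t)) := by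
  by_cases hend : t ^ 2 = r ^ 2
  · simp [hend]
  have ht₁ : -r < t := ht.1.lt_of_ne (by rintro rfl; simp at hend)
  have ht₂ : t < r := ht.2.lt_of_ne (by rintro rfl; simp at hend)
  have : x - t ≠ 0 := by linarith
  have : a - t ≠ 0 := by linarith
  have : a + t ≠ 0 := by linarith
  have : x - a ≠ 0 := by linarith
  have : x + a ≠ 0 := by linarith
  have : a ≠ 0 := by linarith
  have : a ^ 2 - x ^ 2 ≠ 0 := by nlinarith
  have : a ^ 2 - t ^ 2 ≠ 0 := by nlinarith
  rw [neg_sq, sub_neg_eq_add]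
  field_simp
  ring

theorem integral_sqrt_sq_sub_sq_div_sub_mul_sq_sub_sq {a x : ℝ} (hr : 0 < r) (hra : r ≤ a)
    (hax : a < x) :
    ∫ t in (-r)..r, √(r ^ 2 - t ^ 2) / ((x - t) * (a ^ 2 - t ^ 2)) =
      π * (√(x ^ 2 - r ^ 2) - x / a * √(a ^ 2 - r ^ 2)) / (x ^ 2 - a ^ 2) := by
  have hrx : r ≤ x := hra.trans hax.le
  set f := fun y t => √(r ^ 2 - t ^ 2) / (y - t)
  have hfx : IntervalIntegrable (f x) volume (-r) r :=
    intervalIntegrable_sqrt_sq_sub_sq_div_sub hr hrx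
  have hfa : IntervalIntegrable (f a) volume (-r) r :=
    intervalIntegrable_sqrt_sq_sub_sq_div_sub hr hra
  have hfa_neg : IntervalIntegrable (fun t => f a (-t)) volume (-r) r := by
    simpa using (IntervalIntegrable.iff_comp_neg (f := f a)).1 hfa.symm
  have hpartial := fun t (ht : t ∈ uIcc (-r) r) => sqrt_sq_sub_sq_div_sub_mul_sq_sub_sq_eq hra hax
    (by rwa [uIcc_of_le (by linarith)] at ht)
  rw [integral_congr hpartial, integral_add ((hfx.const_mul _).add (hfa.const_mul _))
      (hfa_neg.const_mul _), integral_add (hfx.const_mul _) (hfa.const_mul _),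
    integral_const_mul, integral_const_mul, integral_const_mul, integral_comp_neg (f a), neg_neg]
  simp only [f]
  rw [integral_sqrt_sq_sub_sq_div_sub hr hrx, integral_sqrt_sq_sub_sq_div_sub hr hra]
  have : x - a ≠ 0 := by linarith
  have : x + a ≠ 0 := by linarith
  have : a ≠ 0 := by linarith
  have : a ^ 2 - x ^ 2 ≠ 0 := by nlinarith
  have : x ^ 2 - a ^ 2 ≠ 0 := by nlinarith
  field_simp
  ring

end

/-- For real `c ≥ 1` and real `x > 1 + c`, the Cauchy transform of the Kesten–McKay
law with parameter `c` at `x` equals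
`((1-c)x + (1+c)√(x² - 4c)) / (2(x² - (1+c)²))`. -/
theorem stmt_13 (c : ℝ) (hc : 1 ≤ c) (x : ℝ) (hx : 1 + c < x) :
    ∫ t in (-(2 * Real.sqrt c))..(2 * Real.sqrt c),
        1 / (x - t) *
          ((1 + c) / (2 * Real.pi) * Real.sqrt (4 * c - t ^ 2) / ((1 + c) ^ 2 - t ^ 2)) =
      ((1 - c) * x + (1 + c) * Real.sqrt (x ^ 2 - 4 * c)) /
        (2 * (x ^ 2 - (1 + c) ^ 2)) := by
  set r := 2 * √c
  have hr : 0 < r := by positivity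
  have hr2 : r ^ 2 = 4 * c := by simp only [r, mul_pow, sq_sqrt (by linarith : 0 ≤ c)]; ring
  have hra : r ≤ 1 + c := by nlinarith [sq_nonneg (√c - 1)]
  have hsqrt : √((1 + c) ^ 2 - r ^ 2) = c - 1 := by
    rw [show (1 + c) ^ 2 - r ^ 2 = (c - 1) ^ 2 by rw [hr2]; ring, sqrt_sq (by linarith)]
  have hintegrand : ∀ t,
      1 / (x - t) * ((1 + c) / (2 * π) * √(4 * c - t ^ 2) / ((1 + c) ^ 2 - t ^ 2)) =
        (1 + c) / (2 * π) * (√(r ^ 2 - t ^ 2) / ((x - t) * ((1 + c) ^ 2 - t ^ 2))) := fun t => by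
    rw [hr2]; simp only [div_eq_mul_inv, mul_inv]; ring
  simp_rw [hintegrand]
  rw [integral_const_mul, integral_sqrt_sq_sub_sq_div_sub_mul_sq_sub_sq hr hra hx,
    hsqrt, hr2]
  have : x ^ 2 - (1 + c) ^ 2 ≠ 0 := by nlinarith
  field_simp
  ring
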